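/- arXiv:1812.10096 — 2 statements merged into one kernel-verified Lean document; each statement's English description precedes it below -/
import Mathlib

section
/- Continuous inf-sup inequality: there exists a constant k_c > 0 such that for every ψ = (v, w, V, W) ∈ M there exists Σ ∈ V with ‖Σ‖_V ≤ 1 and b(Σ, ψ) ≥ k_c · ‖ψ‖_M. -/
open MeasureTheory Matrix

noncomputable section

abbrev E3 : Type := EuclideanSpace ℝ (Fin 3)

def dot3 (a b : E3) : ℝ := ∑ j, a j * b j

def cross3 (a b : E3) : E3 :=
  WithLp.toLp 2 ![a 1 * b 2 - a 2 * b 1, a 2 * b 0 - a 0 * b 2, a 0 * b 1 - a 1 * b 0]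

def SqIntOn (f : ℝ → E3) (l : ℝ) : Prop :=
  IntegrableOn f (Set.Ioc 0 l) ∧ IntegrableOn (fun s => ‖f s‖ ^ 2) (Set.Ioc 0 l)

def H1On (l : ℝ) (v dv : ℝ → E3) : Prop :=
  ContinuousOn v (Set.Icc 0 l) ∧ SqIntOn dv l ∧
    ∀ x ∈ Set.Icc 0 l, v x = v 0 + ∫ s in Set.Ioc 0 x, dv s

def EdgeConn {nE nV : ℕ} (tail head : Fin nE → Fin nV) : Prop :=
  ∀ a b : Fin nV, Relation.ReflTransGen
    (fun x y => ∃ i, (tail i = x ∧ head i = y) ∨ (tail i = y ∧ head i = x)) a b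

variable {nE nV : ℕ}

def bform (tail head : Fin nE → Fin nV) (l : Fin nE → ℝ) (t : Fin nE → ℝ → E3)
    (q p : Fin nE → ℝ → E3) (Pp Pm Qp Qm : Fin nE → E3) (al be : E3)
    (v dv w dw : Fin nE → ℝ → E3) (V W : Fin nV → E3) : ℝ :=
  (∑ i, ∫ s in Set.Ioc 0 (l i),
      (-(dot3 (p i s) (dv i s + cross3 (t i s) (w i s))) - dot3 (q i s) (dw i s)))
  + (∑ i, (dot3 (Pp i) (v i (l i)) - dot3 (Pm i) (v i 0)))
  + (∑ i, (dot3 (Qp i) (w i (l i)) - dot3 (Qm i) (w i 0)))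
  - (∑ j, dot3 ((∑ i ∈ Finset.univ.filter fun i => head i = j, Pp i)
        - ∑ i ∈ Finset.univ.filter fun i => tail i = j, Pm i) (V j))
  - (∑ j, dot3 ((∑ i ∈ Finset.univ.filter fun i => head i = j, Qp i)
        - ∑ i ∈ Finset.univ.filter fun i => tail i = j, Qm i) (W j))
  + dot3 al (∑ i, ∫ s in Set.Ioc 0 (l i), v i s)
  + dot3 be (∑ i, ∫ s in Set.Ioc 0 (l i), w i s)

def normVsq (l : Fin nE → ℝ) (q p : Fin nE → ℝ → E3) (Pp Pm Qp Qm : Fin nE → E3)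
    (al be : E3) : ℝ :=
  (∑ i, ∫ s in Set.Ioc 0 (l i), (‖q i s‖ ^ 2 + ‖p i s‖ ^ 2))
  + (∑ i, ‖Pp i‖ ^ 2) + (∑ i, ‖Pm i‖ ^ 2) + (∑ i, ‖Qp i‖ ^ 2) + (∑ i, ‖Qm i‖ ^ 2)
  + ‖al‖ ^ 2 + ‖be‖ ^ 2

def normMsq (l : Fin nE → ℝ) (v dv w dw : Fin nE → ℝ → E3) (V W : Fin nV → E3) : ℝ :=
  (∑ i, ∫ s in Set.Ioc 0 (l i), (‖v i s‖ ^ 2 + ‖dv i s‖ ^ 2 + ‖w i s‖ ^ 2 + ‖dw i s‖ ^ 2))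
  + (∑ j, ‖V j‖ ^ 2) + (∑ j, ‖W j‖ ^ 2)

def matVec (A : Matrix (Fin 3) (Fin 3) ℝ) (x : E3) : E3 := WithLp.toLp 2 (fun j => ∑ l, A j l * x l)

def aform (l : Fin nE → ℝ) (Q : Fin nE → ℝ → Matrix (Fin 3) (Fin 3) ℝ)
    (H : Fin nE → Matrix (Fin 3) (Fin 3) ℝ) (q xi : Fin nE → ℝ → E3) : ℝ :=
  ∑ i, ∫ s in Set.Ioc 0 (l i),
    dot3 (matVec (Q i s * (H i)⁻¹ * (Q i s)ᵀ) (q i s)) (xi i s)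

def PolyDeg (m : ℕ) (g : ℝ → E3) : Prop :=
  ∀ j : Fin 3, ∃ P : Polynomial ℝ, P.natDegree ≤ m ∧ ∀ s, g s j = P.eval s

def SobOn : ℕ → ℝ → (ℝ → E3) → Prop
  | 0, l, g => SqIntOn g l
  | m + 1, l, g => ∃ g', SobOn m l g' ∧ ContinuousOn g (Set.Icc 0 l) ∧
      ∀ x ∈ Set.Icc 0 l, g x = g 0 + ∫ s in Set.Ioc 0 x, g' s


/-!
For `ψ = (v, w, V, W)` the multiplier
`Σ(ψ) = (-∂ₛw, -(∂ₛv + t × w), v(ℓ) - V(head), V(tail) - v(0), w(ℓ) - W(head), W(tail) - w(0),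
∑ ∫ v, ∑ ∫ w)` satisfies `b(Σ(ψ), ψ) = ‖Σ(ψ)‖_V²`, so `Σ(ψ) / ‖Σ(ψ)‖_V` achieves
`b = ‖Σ(ψ)‖_V` and it remains to show `‖ψ‖_M ≤ C ‖Σ(ψ)‖_V`.

That is a Poincaré inequality on the network. Along an edge `w` oscillates by at most
`‖∂ₛw‖_{L¹} ≤ √ℓ ‖∂ₛw‖_{L²}`, its mismatches with the vertex values are components of `Σ(ψ)`, and
connectivity carries these bounds from vertex to vertex; the mean `∑ ∫ w` then fixes the remaining
constant, so `‖w‖_∞` and `|W|` are `O(‖Σ(ψ)‖_V)`. As `|t| = 1`, `∂ₛv = (∂ₛv + t × w) - t × w`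
is then small in `L¹` too, and the same argument bounds `v` and `V`.
-/

open Set

lemma dot3_eq_inner (a b : E3) : dot3 a b = inner ℝ a b := by
  simp [dot3, PiLp.inner_apply, RCLike.inner_apply, mul_comm]

lemma norm_cross3_le (a b : E3) : ‖cross3 a b‖ ≤ ‖a‖ * ‖b‖ := by
  have hsq (x : E3) : ‖x‖ ^ 2 = x 0 ^ 2 + x 1 ^ 2 + x 2 ^ 2 := by
    rw [EuclideanSpace.norm_sq_eq, Fin.sum_univ_three]; simp only [Real.norm_eq_abs, sq_abs]
  have h : ‖cross3 a b‖ ^ 2 ≤ (‖a‖ * ‖b‖) ^ 2 := by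
    rw [mul_pow, hsq, hsq a, hsq b]
    simp only [cross3, Matrix.cons_val_zero, Matrix.cons_val_one, Matrix.cons_val_two,
      Matrix.head_cons, Matrix.tail_cons]
    nlinarith [sq_nonneg (a 0 * b 0 + a 1 * b 1 + a 2 * b 2)]
  exact pow_le_pow_iff_left₀ (norm_nonneg _) (by positivity) two_ne_zero |>.1 h

lemma ContinuousOn.cross3 {t w : ℝ → E3} {s : Set ℝ} (ht : ContinuousOn t s)
    (hw : ContinuousOn w s) : ContinuousOn (fun x => cross3 (t x) (w x)) s := by
  unfold _root_.cross3
  fun_prop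

lemma ContinuousOn.sqIntOn {f : ℝ → E3} {l : ℝ} (h : ContinuousOn f (Icc 0 l)) :
    SqIntOn f l :=
  ⟨(h.integrableOn_compact isCompact_Icc).mono_set Ioc_subset_Icc_self,
    ((h.norm.pow 2).integrableOn_compact isCompact_Icc).mono_set Ioc_subset_Icc_self⟩

lemma SqIntOn.add {f g : ℝ → E3} {l : ℝ} (hf : SqIntOn f l) (hg : SqIntOn g l) :
    SqIntOn (fun s => f s + g s) l := by
  refine ⟨hf.1.add hg.1, Integrable.mono' ((hf.2.add hg.2).const_mul 2)
    ((hf.1.add hg.1).aestronglyMeasurable.norm.pow 2) (ae_of_all _ fun s => ?_)⟩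
  show ‖‖f s + g s‖ ^ 2‖ ≤ 2 * (‖f s‖ ^ 2 + ‖g s‖ ^ 2)
  rw [Real.norm_eq_abs, abs_of_nonneg (by positivity)]
  nlinarith [norm_add_le (f s) (g s), norm_nonneg (f s + g s), sq_nonneg (‖f s‖ - ‖g s‖)]

lemma SqIntOn.const_smul {f : ℝ → E3} {l : ℝ} (hf : SqIntOn f l) (c : ℝ) :
    SqIntOn (fun s => c • f s) l := by
  refine ⟨hf.1.smul c, ?_⟩
  simp only [norm_smul, mul_pow]
  exact hf.2.const_mul _

lemma SqIntOn.neg {f : ℝ → E3} {l : ℝ} (hf : SqIntOn f l) : SqIntOn (fun s => -f s) l :=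
  ⟨hf.1.neg, by simpa only [norm_neg] using hf.2⟩

lemma setIntegral_Ioc_const (l c : ℝ) (hl : 0 ≤ l) : ∫ _ in Ioc 0 l, c = l * c := by
  rw [setIntegral_const, Real.volume_real_Ioc_of_le hl, sub_zero, smul_eq_mul]

lemma sq_setIntegral_Ioc_le {g : ℝ → ℝ} {l : ℝ} (hl : 0 < l) (hg : IntegrableOn g (Ioc 0 l))
    (hg2 : IntegrableOn (fun s => g s ^ 2) (Ioc 0 l)) :
    (∫ s in Ioc 0 l, g s) ^ 2 ≤ l * ∫ s in Ioc 0 l, g s ^ 2 := by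
  set I := ∫ s in Ioc 0 l, g s
  set m := I / l
  -- the variance of `g` about its mean `m` is nonnegative
  have hvar : 0 ≤ ∫ s in Ioc 0 l, (g s - m) ^ 2 := integral_nonneg fun s => sq_nonneg _
  have hexpand : ∫ s in Ioc 0 l, (g s - m) ^ 2
      = (∫ s in Ioc 0 l, g s ^ 2) - 2 * m * I + l * m ^ 2 := by
    have hc : IntegrableOn (fun _ => m ^ 2) (Ioc 0 l) := integrableOn_const measure_Ioc_lt_top.ne
    have e (s : ℝ) : (g s - m) ^ 2 = (g s ^ 2 - m * 2 * g s) + m ^ 2 := by ring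
    simp only [e]
    have h1 : IntegrableOn (fun s => g s ^ 2 - m * 2 * g s) (Ioc 0 l) :=
      hg2.sub (hg.const_mul _)
    rw [integral_add h1 hc, integral_sub hg2 (hg.const_mul _),
      integral_const_mul, setIntegral_Ioc_const _ _ hl.le]
    ring
  have hml : m * l = I := div_mul_cancel₀ I hl.ne'
  nlinarith

lemma setIntegral_norm_le_sqrt_mul_sqrt {f : ℝ → E3} {l B : ℝ} (hl : 0 < l) (hf : SqIntOn f l)
    (hB : ∫ s in Ioc 0 l, ‖f s‖ ^ 2 ≤ B) :
    ∫ s in Ioc 0 l, ‖f s‖ ≤ √l * √B := by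
  have hB0 : 0 ≤ B := (integral_nonneg fun s => sq_nonneg ‖f s‖).trans hB
  rw [← Real.sqrt_mul hl.le, Real.le_sqrt (integral_nonneg fun _ => norm_nonneg _) (by positivity)]
  exact (sq_setIntegral_Ioc_le hl hf.1.norm hf.2).trans (by gcongr)

lemma setIntegral_Ioc_le_mul_of_le {g : ℝ → ℝ} {l M : ℝ} (hl : 0 ≤ l)
    (hg : IntegrableOn g (Ioc 0 l)) (hb : ∀ x ∈ Icc 0 l, g x ≤ M) :
    ∫ s in Ioc 0 l, g s ≤ l * M := by
  rw [← setIntegral_Ioc_const l M hl]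
  exact setIntegral_mono_on hg (integrableOn_const measure_Ioc_lt_top.ne) measurableSet_Ioc
    fun x hx => hb x (Ioc_subset_Icc_self hx)

lemma H1On.norm_sub_le {l : ℝ} {u du : ℝ → E3} (h : H1On l u du) {x : ℝ} (hx : x ∈ Icc 0 l) :
    ‖u x - u 0‖ ≤ ∫ s in Ioc 0 l, ‖du s‖ := by
  rw [h.2.2 x hx, add_sub_cancel_left]
  exact (norm_integral_le_integral_norm _).trans (setIntegral_mono_set h.2.1.1.norm
    (ae_of_all _ fun _ => norm_nonneg _) (Ioc_subset_Ioc_right hx.2).eventuallyLE)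

def EdgeAdj (tail head : Fin nE → Fin nV) (x y : Fin nV) : Prop :=
  ∃ i, (tail i = x ∧ head i = y) ∨ (tail i = y ∧ head i = x)

structure OscillationLE (tail head : Fin nE → Fin nV) (l : Fin nE → ℝ)
    (u du : Fin nE → ℝ → E3) (U : Fin nV → E3) (s : ℝ) : Prop where
  h1On : ∀ i, H1On (l i) (u i) (du i)
  integral_norm_deriv_le : ∀ i, ∫ x in Ioc 0 (l i), ‖du i x‖ ≤ s
  norm_head_sub_le : ∀ i, ‖u i (l i) - U (head i)‖ ≤ s
  norm_tail_sub_le : ∀ i, ‖U (tail i) - u i 0‖ ≤ s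

namespace OscillationLE

variable {tail head : Fin nE → Fin nV} {l : Fin nE → ℝ} {u du : Fin nE → ℝ → E3}
  {U : Fin nV → E3} {s : ℝ}

lemma nonneg (h : OscillationLE tail head l u du U s) (i : Fin nE) : 0 ≤ s :=
  (integral_nonneg fun _ => norm_nonneg _).trans (h.integral_norm_deriv_le i)

lemma norm_tail_sub_le_two_mul (h : OscillationLE tail head l u du U s) (i : Fin nE) {x : ℝ}
    (hx : x ∈ Icc 0 (l i)) : ‖U (tail i) - u i x‖ ≤ 2 * s := by
  calc ‖U (tail i) - u i x‖ ≤ ‖U (tail i) - u i 0‖ + ‖u i x - u i 0‖ := by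
        rw [norm_sub_rev (u i x)]; exact norm_sub_le_norm_sub_add_norm_sub ..
    _ ≤ 2 * s := by
        linarith [((h.h1On i).norm_sub_le hx).trans (h.integral_norm_deriv_le i),
          h.norm_tail_sub_le i]

lemma norm_sub_le_of_edgeAdj (h : OscillationLE tail head l u du U s) (hl : ∀ i, 0 ≤ l i)
    {a b : Fin nV} (hab : EdgeAdj tail head a b) : ‖U a - U b‖ ≤ 3 * s := by
  obtain ⟨i, hi⟩ := hab
  have hedge : ‖U (tail i) - U (head i)‖ ≤ 3 * s :=
    calc ‖U (tail i) - U (head i)‖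
        ≤ ‖U (tail i) - u i (l i)‖ + ‖u i (l i) - U (head i)‖ :=
          norm_sub_le_norm_sub_add_norm_sub ..
      _ ≤ 3 * s := by
          linarith [h.norm_tail_sub_le_two_mul i ⟨hl i, le_rfl⟩, h.norm_head_sub_le i]
  rcases hi with ⟨rfl, rfl⟩ | ⟨rfl, rfl⟩
  · exact hedge
  · rwa [norm_sub_rev]

end OscillationLE

section Poincare

variable {tail head : Fin nE → Fin nV} {l : Fin nE → ℝ}

lemma exists_norm_sub_le_of_reflTransGen (hl : ∀ i, 0 ≤ l i) {a b : Fin nV}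
    (hab : Relation.ReflTransGen (EdgeAdj tail head) a b) :
    ∃ K ≥ (0 : ℝ), ∀ u du U s, OscillationLE tail head l u du U s → ‖U a - U b‖ ≤ K * s := by
  induction hab with
  | refl => exact ⟨0, le_rfl, fun _ _ _ _ _ => by simp⟩
  | tail _ hbc ih =>
    obtain ⟨K, hK, hab⟩ := ih
    refine ⟨K + 3, by positivity, fun u du U s h => ?_⟩
    calc _ ≤ _ := norm_sub_le_norm_sub_add_norm_sub _ _ _
      _ ≤ K * s + 3 * s := add_le_add (hab u du U s h) (h.norm_sub_le_of_edgeAdj hl hbc)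
      _ = (K + 3) * s := by ring

lemma exists_norm_sub_le_of_edgeConn (hl : ∀ i, 0 ≤ l i) (hNE : 0 < nE)
    (hconn : EdgeConn tail head) (j₀ : Fin nV) :
    ∃ K ≥ (0 : ℝ), ∀ u du U s, OscillationLE tail head l u du U s →
      (∀ j, ‖U j - U j₀‖ ≤ K * s) ∧ ∀ i, ∀ x ∈ Icc 0 (l i), ‖u i x - U j₀‖ ≤ K * s := by
  choose K hK0 hK using fun j => exists_norm_sub_le_of_reflTransGen hl (hconn j j₀)
  have hKsum (j : Fin nV) : K j ≤ ∑ j, K j :=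
    Finset.single_le_sum (fun j _ => hK0 j) (Finset.mem_univ j)
  refine ⟨2 + ∑ j, K j, add_nonneg zero_le_two (Finset.sum_nonneg fun j _ => hK0 j), ?_⟩
  intro u du U s h
  have hs : 0 ≤ s := h.nonneg ⟨0, hNE⟩
  have hU (j : Fin nV) : ‖U j - U j₀‖ ≤ (∑ j, K j) * s :=
    (hK j u du U s h).trans (by gcongr; exact hKsum j)
  refine ⟨fun j => (hU j).trans (by nlinarith), fun i x hx => ?_⟩
  calc ‖u i x - U j₀‖ ≤ ‖U (tail i) - u i x‖ + ‖U (tail i) - U j₀‖ := by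
        rw [norm_sub_rev (U (tail i))]; exact norm_sub_le_norm_sub_add_norm_sub ..
    _ ≤ 2 * s + (∑ j, K j) * s := add_le_add (h.norm_tail_sub_le_two_mul i hx) (hU _)
    _ = _ := by ring

lemma mul_norm_le_of_norm_sum_setIntegral_le (hl : ∀ i, 0 ≤ l i) {u : Fin nE → ℝ → E3}
    (hu : ∀ i, IntegrableOn (u i) (Ioc 0 (l i))) {c : E3} {D s : ℝ}
    (hD : ∀ i, ∀ x ∈ Icc 0 (l i), ‖u i x - c‖ ≤ D)
    (hmean : ‖∑ i, ∫ x in Ioc 0 (l i), u i x‖ ≤ s) :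
    (∑ i, l i) * ‖c‖ ≤ s + (∑ i, l i) * D := by
  have hedge (i : Fin nE) :
      ∫ x in Ioc 0 (l i), u i x - c = (∫ x in Ioc 0 (l i), u i x) - l i • c := by
    rw [integral_sub (hu i) (integrableOn_const measure_Ioc_lt_top.ne), setIntegral_const,
      Real.volume_real_Ioc_of_le (hl i), sub_zero]
  have hnorm (i : Fin nE) : ‖∫ x in Ioc 0 (l i), u i x - c‖ ≤ D * l i := by
    refine (norm_setIntegral_le_of_norm_le_const measure_Ioc_lt_top
      fun x hx => hD i x (Ioc_subset_Icc_self hx)).trans_eq ?_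
    rw [Real.volume_real_Ioc_of_le (hl i), sub_zero]
  have hsplit : (∑ i, l i) • c
      = (∑ i, ∫ x in Ioc 0 (l i), u i x) - ∑ i, ∫ x in Ioc 0 (l i), u i x - c := by
    simp only [hedge, Finset.sum_sub_distrib, Finset.sum_smul, sub_sub_cancel]
  calc (∑ i, l i) * ‖c‖ = ‖(∑ i, l i) • c‖ := by
        rw [norm_smul, Real.norm_of_nonneg (Finset.sum_nonneg fun i _ => hl i)]
    _ ≤ s + ∑ i, D * l i := by
        rw [hsplit]
        exact (norm_sub_le _ _).trans (add_le_add hmean ((norm_sum_le _ _).trans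
          (Finset.sum_le_sum fun i _ => hnorm i)))
    _ = s + (∑ i, l i) * D := by rw [← Finset.mul_sum, mul_comm]

theorem exists_network_poincare (hl : ∀ i, 0 < l i) (hNE : 0 < nE)
    (hconn : EdgeConn tail head) :
    ∃ C ≥ (0 : ℝ), ∀ u du U s, OscillationLE tail head l u du U s →
      ‖∑ i, ∫ x in Ioc 0 (l i), u i x‖ ≤ s →
      (∀ j, ‖U j‖ ≤ C * s) ∧ ∀ i, ∀ x ∈ Icc 0 (l i), ‖u i x‖ ≤ C * s := by
  set L := ∑ i, l i
  have hL : 0 < L := Finset.sum_pos (fun i _ => hl i) ⟨⟨0, hNE⟩, Finset.mem_univ _⟩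
  have hl0 (i : Fin nE) : 0 ≤ l i := (hl i).le
  obtain ⟨K, hK0, hK⟩ := exists_norm_sub_le_of_edgeConn hl0 hNE hconn (tail ⟨0, hNE⟩)
  refine ⟨2 * K + L⁻¹, by positivity, fun u du U s h hmean => ?_⟩
  obtain ⟨hU, hu⟩ := hK u du U s h
  -- the mean value of `u` over the network pins down the reference vertex value
  have hc : ‖U (tail ⟨0, hNE⟩)‖ ≤ (K + L⁻¹) * s := by
    have := mul_norm_le_of_norm_sum_setIntegral_le hl0
      (fun i => ((h.h1On i).1.integrableOn_compact isCompact_Icc).mono_set Ioc_subset_Icc_self)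
      hu hmean
    refine le_of_mul_le_mul_left (this.trans_eq ?_) hL
    field_simp
    ring
  constructor
  · intro j
    calc ‖U j‖ ≤ ‖U j - U (tail ⟨0, hNE⟩)‖ + ‖U (tail ⟨0, hNE⟩)‖ :=
          norm_le_norm_sub_add _ _
      _ ≤ K * s + (K + L⁻¹) * s := add_le_add (hU j) hc
      _ = _ := by ring
  · intro i x hx
    calc ‖u i x‖ ≤ ‖u i x - U (tail ⟨0, hNE⟩)‖ + ‖U (tail ⟨0, hNE⟩)‖ :=
          norm_le_norm_sub_add _ _
      _ ≤ K * s + (K + L⁻¹) * s := add_le_add (hu i x hx) hc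
      _ = _ := by ring

end Poincare

section Residual

variable (tail head : Fin nE → Fin nV) (l : Fin nE → ℝ) (t : Fin nE → ℝ → E3)
  (v dv w dw : Fin nE → ℝ → E3) (V W : Fin nV → E3)

/-- `‖Σ(ψ)‖_V²`. -/
def residualSq : ℝ :=
  normVsq l (fun i s => -dw i s) (fun i s => -(dv i s + cross3 (t i s) (w i s)))
    (fun i => v i (l i) - V (head i)) (fun i => V (tail i) - v i 0)
    (fun i => w i (l i) - W (head i)) (fun i => W (tail i) - w i 0)
    (∑ i, ∫ s in Ioc 0 (l i), v i s) (∑ i, ∫ s in Ioc 0 (l i), w i s)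

lemma sum_dot3_sub_filter (P Q : Fin nE → E3) (Z : Fin nV → E3) :
    ∑ j, dot3 ((∑ i ∈ Finset.univ.filter fun i => head i = j, P i)
        - ∑ i ∈ Finset.univ.filter fun i => tail i = j, Q i) (Z j)
      = ∑ i, (dot3 (P i) (Z (head i)) - dot3 (Q i) (Z (tail i))) := by
  have hfiber (g : Fin nE → Fin nV) (R : Fin nE → E3) :
      ∑ j, dot3 (∑ i ∈ Finset.univ.filter fun i => g i = j, R i) (Z j)
        = ∑ i, dot3 (R i) (Z (g i)) := by
    simp only [dot3_eq_inner, sum_inner]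
    rw [← Finset.sum_fiberwise Finset.univ g fun i => inner ℝ (R i) (Z (g i))]
    refine Finset.sum_congr rfl fun j _ => Finset.sum_congr rfl fun i hi => ?_
    rw [(Finset.mem_filter.1 hi).2]
  simp only [dot3_eq_inner, inner_sub_left, Finset.sum_sub_distrib] at hfiber ⊢
  rw [hfiber, hfiber]

lemma dot3_smul_neg_add (r : ℝ) (x y : E3) :
    -dot3 (r • -x) x - dot3 (r • -y) y = r * (‖-y‖ ^ 2 + ‖-x‖ ^ 2) := by
  simp only [dot3_eq_inner, inner_smul_left, inner_neg_left, norm_neg,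
    real_inner_self_eq_norm_sq, RCLike.conj_to_real]
  ring

lemma dot3_smul_self (r : ℝ) (x : E3) : dot3 (r • x) x = r * ‖x‖ ^ 2 := by
  rw [dot3_eq_inner, inner_smul_left, real_inner_self_eq_norm_sq, RCLike.conj_to_real]

lemma dot3_smul_sub_jump (r : ℝ) (a b c d : E3) :
    dot3 (r • (a - b)) a - dot3 (r • (c - d)) d - (dot3 (r • (a - b)) b - dot3 (r • (c - d)) c)
      = r * ‖a - b‖ ^ 2 + r * ‖c - d‖ ^ 2 := by
  simp only [dot3_eq_inner, inner_smul_left, RCLike.conj_to_real, ← real_inner_self_eq_norm_sq,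
    inner_sub_left, inner_sub_right]
  ring

lemma bform_smul_residual (r : ℝ) :
    bform tail head l t (fun i s => r • -dw i s)
      (fun i s => r • -(dv i s + cross3 (t i s) (w i s)))
      (fun i => r • (v i (l i) - V (head i))) (fun i => r • (V (tail i) - v i 0))
      (fun i => r • (w i (l i) - W (head i))) (fun i => r • (W (tail i) - w i 0))
      (r • ∑ i, ∫ s in Ioc 0 (l i), v i s) (r • ∑ i, ∫ s in Ioc 0 (l i), w i s) v dv w dw V W
      = r * residualSq tail head l t v dv w dw V W := by
  have hjump (a b : Fin nE → E3) (Z : Fin nV → E3) :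
      ∑ i, (dot3 (r • (a i - Z (head i))) (a i) - dot3 (r • (Z (tail i) - b i)) (b i))
        - ∑ i, (dot3 (r • (a i - Z (head i))) (Z (head i))
          - dot3 (r • (Z (tail i) - b i)) (Z (tail i)))
      = r * ∑ i, ‖a i - Z (head i)‖ ^ 2 + r * ∑ i, ‖Z (tail i) - b i‖ ^ 2 := by
    rw [← Finset.sum_sub_distrib, Finset.mul_sum, Finset.mul_sum, ← Finset.sum_add_distrib]
    exact Finset.sum_congr rfl fun i _ => dot3_smul_sub_jump r _ _ _ _
  unfold bform residualSq normVsq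
  simp only [dot3_smul_neg_add, integral_const_mul, sum_dot3_sub_filter, dot3_smul_self]
  rw [← Finset.mul_sum]
  linear_combination hjump (fun i => v i (l i)) (fun i => v i 0) V
    + hjump (fun i => w i (l i)) (fun i => w i 0) W

end Residual

section NormV

variable {l : Fin nE → ℝ} {q p : Fin nE → ℝ → E3} {Pp Pm Qp Qm : Fin nE → E3} {al be : E3}

lemma normVsq_smul (r : ℝ) :
    normVsq l (fun i s => r • q i s) (fun i s => r • p i s) (fun i => r • Pp i)
      (fun i => r • Pm i) (fun i => r • Qp i) (fun i => r • Qm i) (r • al) (r • be)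
      = r ^ 2 * normVsq l q p Pp Pm Qp Qm al be := by
  simp only [normVsq, norm_smul, mul_pow, Real.norm_eq_abs, sq_abs, ← mul_add,
    integral_const_mul, ← Finset.mul_sum]

lemma normVsq_nonneg : 0 ≤ normVsq l q p Pp Pm Qp Qm al be := by
  have : 0 ≤ ∑ i, ∫ s in Ioc 0 (l i), (‖q i s‖ ^ 2 + ‖p i s‖ ^ 2) :=
    Finset.sum_nonneg fun i _ => integral_nonneg fun s => by positivity
  unfold normVsq
  positivity

lemma le_of_normVsq_le {σ : ℝ} (hσ : 0 ≤ σ) (hN : normVsq l q p Pp Pm Qp Qm al be ≤ σ ^ 2) :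
    (∀ i, ∫ s in Ioc 0 (l i), (‖q i s‖ ^ 2 + ‖p i s‖ ^ 2) ≤ σ ^ 2) ∧
      (∀ i, ‖Pp i‖ ≤ σ) ∧ (∀ i, ‖Pm i‖ ≤ σ) ∧ (∀ i, ‖Qp i‖ ≤ σ) ∧ (∀ i, ‖Qm i‖ ≤ σ) ∧
      ‖al‖ ≤ σ ∧ ‖be‖ ≤ σ := by
  have hint (i : Fin nE) : 0 ≤ ∫ s in Ioc 0 (l i), (‖q i s‖ ^ 2 + ‖p i s‖ ^ 2) :=
    integral_nonneg fun s => by positivity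
  have hsum {f : Fin nE → ℝ} (hf : ∀ i, 0 ≤ f i) : 0 ≤ ∑ i, f i ∧ ∀ i, f i ≤ ∑ i, f i :=
    ⟨Finset.sum_nonneg fun i _ => hf i,
      fun i => Finset.single_le_sum (fun i _ => hf i) (Finset.mem_univ i)⟩
  have hsq (f : Fin nE → E3) := hsum fun i => sq_nonneg ‖f i‖
  have hle {x : E3} (hx : ‖x‖ ^ 2 ≤ σ ^ 2) : ‖x‖ ≤ σ :=
    (pow_le_pow_iff_left₀ (norm_nonneg x) hσ two_ne_zero).1 hx
  obtain ⟨hI0, hI⟩ := hsum hint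
  obtain ⟨h10, h1⟩ := hsq Pp
  obtain ⟨h20, h2⟩ := hsq Pm
  obtain ⟨h30, h3⟩ := hsq Qp
  obtain ⟨h40, h4⟩ := hsq Qm
  have h5 := sq_nonneg ‖al‖
  have h6 := sq_nonneg ‖be‖
  unfold normVsq at hN
  exact ⟨fun i => by linarith [hI i], fun i => hle (by linarith [h1 i]),
    fun i => hle (by linarith [h2 i]), fun i => hle (by linarith [h3 i]),
    fun i => hle (by linarith [h4 i]), hle (by linarith), hle (by linarith)⟩

end NormV

section Coercivity

lemma norm_cross3_le_of_norm_eq_one {a : E3} (ha : ‖a‖ = 1) (b : E3) : ‖cross3 a b‖ ≤ ‖b‖ :=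
  (norm_cross3_le a b).trans_eq (by rw [ha, one_mul])

lemma SqIntOn.add_cross3 {l : ℝ} {dv w t : ℝ → E3} (hdv : SqIntOn dv l)
    (ht : ContinuousOn t (Icc 0 l)) (hw : ContinuousOn w (Icc 0 l)) :
    SqIntOn (fun s => dv s + cross3 (t s) (w s)) l :=
  hdv.add (ht.cross3 hw).sqIntOn

lemma setIntegral_sq_le_of_add_le {f g : ℝ → E3} {l B : ℝ} (hf : SqIntOn f l)
    (hg : SqIntOn g l) (h : ∫ s in Ioc 0 l, (‖f s‖ ^ 2 + ‖g s‖ ^ 2) ≤ B) :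
    ∫ s in Ioc 0 l, ‖f s‖ ^ 2 ≤ B ∧ ∫ s in Ioc 0 l, ‖g s‖ ^ 2 ≤ B := by
  rw [integral_add hf.2 hg.2] at h
  have hf0 : 0 ≤ ∫ s in Ioc 0 l, ‖f s‖ ^ 2 := integral_nonneg fun s => sq_nonneg _
  have hg0 : 0 ≤ ∫ s in Ioc 0 l, ‖g s‖ ^ 2 := integral_nonneg fun s => sq_nonneg _
  constructor <;> linarith

lemma setIntegral_norm_le_of_add_cross3 {l σ B : ℝ} (hl : 0 < l) {dv w t : ℝ → E3}
    (hdv : SqIntOn dv l) (htc : ContinuousOn t (Icc 0 l)) (hw : ContinuousOn w (Icc 0 l))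
    (htu : ∀ s ∈ Icc 0 l, ‖t s‖ = 1) (hσ : 0 ≤ σ)
    (hp : ∫ s in Ioc 0 l, ‖dv s + cross3 (t s) (w s)‖ ^ 2 ≤ σ ^ 2)
    (hB : ∀ x ∈ Icc 0 l, ‖w x‖ ≤ B) :
    ∫ s in Ioc 0 l, ‖dv s‖ ≤ √l * σ + l * B := by
  have hcross : SqIntOn (fun s => cross3 (t s) (w s)) l := (htc.cross3 hw).sqIntOn
  have hpsq := hdv.add_cross3 htc hw
  calc ∫ s in Ioc 0 l, ‖dv s‖
      ≤ ∫ s in Ioc 0 l, (‖dv s + cross3 (t s) (w s)‖ + ‖cross3 (t s) (w s)‖) :=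
        setIntegral_mono_on hdv.1.norm (hpsq.1.norm.add hcross.1.norm) measurableSet_Ioc
          fun s _ => norm_le_add_norm_add _ _
    _ ≤ √l * σ + l * B := by
        rw [integral_add hpsq.1.norm hcross.1.norm]
        gcongr
        · simpa only [Real.sqrt_sq hσ] using setIntegral_norm_le_sqrt_mul_sqrt hl hpsq hp
        · exact setIntegral_Ioc_le_mul_of_le hl.le hcross.1.norm fun x hx =>
            (norm_cross3_le_of_norm_eq_one (htu x hx) _).trans (hB x hx)

lemma setIntegral_energy_le {l σ K : ℝ} (hl : 0 ≤ l) {v dv w dw t : ℝ → E3}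
    (hv : H1On l v dv) (hw : H1On l w dw) (htc : ContinuousOn t (Icc 0 l))
    (htu : ∀ s ∈ Icc 0 l, ‖t s‖ = 1)
    (hres : ∫ s in Ioc 0 l, (‖dw s‖ ^ 2 + ‖dv s + cross3 (t s) (w s)‖ ^ 2) ≤ σ ^ 2)
    (hvw : ∀ x ∈ Icc 0 l, ‖v x‖ ≤ K * σ ∧ ‖w x‖ ≤ K * σ) :
    ∫ s in Ioc 0 l, (‖v s‖ ^ 2 + ‖dv s‖ ^ 2 + ‖w s‖ ^ 2 + ‖dw s‖ ^ 2)
      ≤ 2 * σ ^ 2 + l * (4 * K ^ 2 * σ ^ 2) := by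
  have hp := hv.2.1.add_cross3 htc hw.1
  have hlhs : IntegrableOn (fun s => ‖v s‖ ^ 2 + ‖dv s‖ ^ 2 + ‖w s‖ ^ 2 + ‖dw s‖ ^ 2) (Ioc 0 l) :=
    ((hv.1.sqIntOn.2.add hv.2.1.2).add hw.1.sqIntOn.2).add hw.2.1.2
  have hrhs : IntegrableOn
      (fun s => 2 * (‖dw s‖ ^ 2 + ‖dv s + cross3 (t s) (w s)‖ ^ 2)) (Ioc 0 l) :=
    (hw.2.1.2.add hp.2).const_mul 2
  have hconst : IntegrableOn (fun _ => 4 * K ^ 2 * σ ^ 2) (Ioc 0 l) :=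
    integrableOn_const measure_Ioc_lt_top.ne
  calc _ ≤ ∫ s in Ioc 0 l,
        (2 * (‖dw s‖ ^ 2 + ‖dv s + cross3 (t s) (w s)‖ ^ 2) + 4 * K ^ 2 * σ ^ 2) := by
        refine setIntegral_mono_on hlhs (hrhs.add hconst) measurableSet_Ioc fun x hx => ?_
        obtain ⟨hvx, hwx⟩ := hvw x (Ioc_subset_Icc_self hx)
        have hcross : ‖cross3 (t x) (w x)‖ ≤ K * σ :=
          (norm_cross3_le_of_norm_eq_one (htu x (Ioc_subset_Icc_self hx)) _).trans hwx
        have hdv : ‖dv x‖ ≤ ‖dv x + cross3 (t x) (w x)‖ + K * σ := by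
          linarith [norm_le_add_norm_add (dv x) (cross3 (t x) (w x))]
        have hdv2 := pow_le_pow_left₀ (norm_nonneg _) hdv 2
        nlinarith [pow_le_pow_left₀ (norm_nonneg _) hvx 2, pow_le_pow_left₀ (norm_nonneg _) hwx 2,
          sq_nonneg (‖dv x + cross3 (t x) (w x)‖ - K * σ)]
    _ ≤ 2 * σ ^ 2 + l * (4 * K ^ 2 * σ ^ 2) := by
        rw [integral_add hrhs hconst, integral_const_mul, setIntegral_Ioc_const _ _ hl]
        linarith

variable {tail head : Fin nE → Fin nV} {l : Fin nE → ℝ} {t : Fin nE → ℝ → E3}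

theorem exists_sup_le_of_residualSq_le (hl : ∀ i, 0 < l i) (hNE : 0 < nE)
    (hconn : EdgeConn tail head) (htc : ∀ i, ContinuousOn (t i) (Icc 0 (l i)))
    (htu : ∀ i, ∀ s ∈ Icc 0 (l i), ‖t i s‖ = 1) :
    ∃ K ≥ (0 : ℝ), ∀ (v dv w dw : Fin nE → ℝ → E3) (V W : Fin nV → E3) (σ : ℝ),
      (∀ i, H1On (l i) (v i) (dv i)) → (∀ i, H1On (l i) (w i) (dw i)) → 0 ≤ σ →
      residualSq tail head l t v dv w dw V W ≤ σ ^ 2 →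
      (∀ j, ‖V j‖ ≤ K * σ ∧ ‖W j‖ ≤ K * σ) ∧
        ∀ i, ∀ x ∈ Icc 0 (l i), ‖v i x‖ ≤ K * σ ∧ ‖w i x‖ ≤ K * σ := by
  obtain ⟨C, hC0, hC⟩ := exists_network_poincare hl hNE hconn
  set Λ := 1 + ∑ i, l i
  have hlΛ (i : Fin nE) : l i ≤ Λ := by
    linarith [Finset.single_le_sum (fun i _ => (hl i).le) (Finset.mem_univ i)]
  have hΛ1 : 1 ≤ Λ := by linarith [Finset.sum_nonneg fun i (_ : i ∈ Finset.univ) => (hl i).le]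
  have hΛ0 : 0 ≤ Λ := zero_le_one.trans hΛ1
  have hsqrtΛ (i : Fin nE) : √(l i) ≤ Λ :=
    Real.sqrt_le_iff.2 ⟨by linarith, by nlinarith [hlΛ i, hl i]⟩
  refine ⟨C * (Λ * (1 + Λ * C)), by positivity, ?_⟩
  intro v dv w dw V W σ hv hw hσ hS
  obtain ⟨hint, hvh, hvt, hwh, hwt, hvm, hwm⟩ := le_of_normVsq_le hσ hS
  simp only [norm_neg] at hint
  have hsq (i : Fin nE) := setIntegral_sq_le_of_add_le (hw i).2.1
    ((hv i).2.1.add_cross3 (htc i) (hw i).1) (hint i)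
  have hσΛ : σ ≤ Λ * σ := le_mul_of_one_le_left hσ hΛ1
  -- Poincaré for `w`, whose derivative is controlled in `L²`
  obtain ⟨hW, hw'⟩ := hC w dw W (Λ * σ)
    ⟨hw, fun i => (setIntegral_norm_le_sqrt_mul_sqrt (hl i) (hw i).2.1 (hsq i).1).trans
      (by rw [Real.sqrt_sq hσ]; gcongr; exact hsqrtΛ i),
      fun i => (hwh i).trans hσΛ, fun i => (hwt i).trans hσΛ⟩ (hwm.trans hσΛ)
  -- Poincaré for `v`, whose derivative is `(∂ₛv + t × w) - t × w`
  have hΛCσ : 0 ≤ C * (Λ * σ) := mul_nonneg hC0 (mul_nonneg hΛ0 hσ)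
  have hσΛ' : σ ≤ Λ * (1 + Λ * C) * σ :=
    hσΛ.trans ((le_add_of_nonneg_right (mul_nonneg hΛ0 hΛCσ)).trans_eq (by ring))
  obtain ⟨hV, hv'⟩ := hC v dv V (Λ * (1 + Λ * C) * σ)
    ⟨hv, fun i => (setIntegral_norm_le_of_add_cross3 (hl i) (hv i).2.1 (htc i) (hw i).1 (htu i)
      hσ (hsq i).2 (hw' i)).trans ((add_le_add (mul_le_mul_of_nonneg_right (hsqrtΛ i) hσ)
        (mul_le_mul_of_nonneg_right (hlΛ i) hΛCσ)).trans_eq (by ring)),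
      fun i => (hvh i).trans hσΛ', fun i => (hvt i).trans hσΛ'⟩ (hvm.trans hσΛ')
  have hWK : C * (Λ * σ) ≤ C * (Λ * (1 + Λ * C)) * σ := by
    have := mul_nonneg hC0 (mul_nonneg hΛ0 hΛCσ)
    nlinarith
  have hVK : C * (Λ * (1 + Λ * C) * σ) = C * (Λ * (1 + Λ * C)) * σ := by ring
  exact ⟨fun j => ⟨(hV j).trans_eq hVK, (hW j).trans hWK⟩,
    fun i x hx => ⟨(hv' i x hx).trans_eq hVK, (hw' i x hx).trans hWK⟩⟩

lemma normMsq_le_of_sup_le (hl : ∀ i, 0 ≤ l i) (htc : ∀ i, ContinuousOn (t i) (Icc 0 (l i)))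
    (htu : ∀ i, ∀ s ∈ Icc 0 (l i), ‖t i s‖ = 1) {v dv w dw : Fin nE → ℝ → E3}
    {V W : Fin nV → E3} (hv : ∀ i, H1On (l i) (v i) (dv i)) (hw : ∀ i, H1On (l i) (w i) (dw i))
    {K σ : ℝ} (hσ : 0 ≤ σ) (hS : residualSq tail head l t v dv w dw V W ≤ σ ^ 2)
    (hVW : ∀ j, ‖V j‖ ≤ K * σ ∧ ‖W j‖ ≤ K * σ)
    (hvw : ∀ i, ∀ x ∈ Icc 0 (l i), ‖v i x‖ ≤ K * σ ∧ ‖w i x‖ ≤ K * σ) :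
    normMsq l v dv w dw V W ≤ (2 * nE + (4 * ∑ i, l i + 2 * nV) * K ^ 2) * σ ^ 2 := by
  have hint := (le_of_normVsq_le hσ hS).1
  simp only [norm_neg] at hint
  have hsq {x : E3} (hx : ‖x‖ ≤ K * σ) : ‖x‖ ^ 2 ≤ K ^ 2 * σ ^ 2 :=
    (pow_le_pow_left₀ (norm_nonneg x) hx 2).trans_eq (by ring)
  have hedge (i : Fin nE) := setIntegral_energy_le (hl i) (hv i) (hw i) (htc i) (htu i) (hint i)
    (hvw i)
  have hvert (f : Fin nV → E3) (hf : ∀ j, ‖f j‖ ≤ K * σ) : ∑ j, ‖f j‖ ^ 2 ≤ nV * (K ^ 2 * σ ^ 2) :=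
    (Finset.sum_le_sum fun j _ => hsq (hf j)).trans_eq (by simp)
  unfold normMsq
  calc _ ≤ ∑ i, (2 * σ ^ 2 + l i * (4 * K ^ 2 * σ ^ 2)) + nV * (K ^ 2 * σ ^ 2)
        + nV * (K ^ 2 * σ ^ 2) := by
        gcongr with i
        exacts [hedge i, hvert V fun j => (hVW j).1, hvert W fun j => (hVW j).2]
    _ = _ := by
        rw [Finset.sum_add_distrib, Finset.sum_const, Finset.card_univ, Fintype.card_fin,
          nsmul_eq_mul, ← Finset.sum_mul]
        ring

theorem exists_normMsq_le_mul_residualSq (hl : ∀ i, 0 < l i) (hNE : 0 < nE)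
    (hconn : EdgeConn tail head) (htc : ∀ i, ContinuousOn (t i) (Icc 0 (l i)))
    (htu : ∀ i, ∀ s ∈ Icc 0 (l i), ‖t i s‖ = 1) :
    ∃ C ≥ (0 : ℝ), ∀ (v dv w dw : Fin nE → ℝ → E3) (V W : Fin nV → E3),
      (∀ i, H1On (l i) (v i) (dv i)) → (∀ i, H1On (l i) (w i) (dw i)) →
      normMsq l v dv w dw V W ≤ C * residualSq tail head l t v dv w dw V W := by
  obtain ⟨K, -, hK⟩ := exists_sup_le_of_residualSq_le hl hNE hconn htc htu
  have hL : 0 ≤ ∑ i, l i := Finset.sum_nonneg fun i _ => (hl i).le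
  refine ⟨2 * nE + (4 * ∑ i, l i + 2 * nV) * K ^ 2, by positivity, ?_⟩
  intro v dv w dw V W hv hw
  set S := residualSq tail head l t v dv w dw V W
  have hS : √S ^ 2 = S := Real.sq_sqrt normVsq_nonneg
  obtain ⟨hVW, hvw⟩ := hK v dv w dw V W _ hv hw (Real.sqrt_nonneg _) hS.ge
  exact (normMsq_le_of_sup_le (fun i => (hl i).le) htc htu hv hw (Real.sqrt_nonneg _) hS.ge hVW
    hvw).trans_eq (by rw [hS])

end Coercivity

theorem stent_continuous_inf_sup_general
    (tail head : Fin nE → Fin nV) (l : Fin nE → ℝ)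
    (hl : ∀ i, 0 < l i) (hNE : 0 < nE) (hconn : EdgeConn tail head)
    (t : Fin nE → ℝ → E3)
    (htc : ∀ i, ContinuousOn (t i) (Set.Icc 0 (l i)))
    (htu : ∀ i, ∀ s ∈ Set.Icc 0 (l i), ‖t i s‖ = 1) :
    ∃ kc > (0:ℝ), ∀ (v dv w dw : Fin nE → ℝ → E3) (V W : Fin nV → E3),
      (∀ i, H1On (l i) (v i) (dv i)) → (∀ i, H1On (l i) (w i) (dw i)) →
      ∃ (q p : Fin nE → ℝ → E3) (Pp Pm Qp Qm : Fin nE → E3) (al be : E3),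
        (∀ i, SqIntOn (q i) (l i)) ∧ (∀ i, SqIntOn (p i) (l i)) ∧
        Real.sqrt (normVsq l q p Pp Pm Qp Qm al be) ≤ 1 ∧
        kc * Real.sqrt (normMsq l v dv w dw V W) ≤
          bform tail head l t q p Pp Pm Qp Qm al be v dv w dw V W := by
  obtain ⟨C, hC0, hC⟩ := exists_normMsq_le_mul_residualSq hl hNE hconn htc htu
  refine ⟨(√(C + 1))⁻¹, by positivity, fun v dv w dw V W hv hw => ?_⟩
  set S := residualSq tail head l t v dv w dw V W
  have hS : 0 ≤ S := normVsq_nonneg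
  -- the normalised residual multiplier `Σ(ψ) / ‖Σ(ψ)‖`
  set r := (√S)⁻¹ with hr
  refine ⟨fun i s => r • -dw i s, fun i s => r • -(dv i s + cross3 (t i s) (w i s)),
    fun i => r • (v i (l i) - V (head i)), fun i => r • (V (tail i) - v i 0),
    fun i => r • (w i (l i) - W (head i)), fun i => r • (W (tail i) - w i 0),
    r • ∑ i, ∫ s in Ioc 0 (l i), v i s, r • ∑ i, ∫ s in Ioc 0 (l i), w i s,
    fun i => (hw i).2.1.neg.const_smul r,
    fun i => ((hv i).2.1.add_cross3 (htc i) (hw i).1).neg.const_smul r, ?_, ?_⟩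
  · rw [normVsq_smul, Real.sqrt_le_one, hr, inv_pow, Real.sq_sqrt hS]
    exact inv_mul_le_one_of_le₀ le_rfl hS
  · have hrS : r * S = √S := by rw [hr, inv_mul_eq_div, Real.div_sqrt]
    rw [bform_smul_residual, hrS, inv_mul_le_iff₀ (by positivity),
      ← Real.sqrt_mul (by positivity)]
    exact Real.sqrt_le_sqrt ((hC v dv w dw V W hv hw).trans (by nlinarith))

/-- Continuous inf-sup inequality. -/
theorem stent_continuous_inf_sup
    (tail head : Fin nE → Fin nV) (l : Fin nE → ℝ)
    (hl : ∀ i, 0 < l i) (hNE : 0 < nE) (hconn : EdgeConn tail head)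
    (Φ t : Fin nE → ℝ → E3)
    (hΦ : ∀ i, ∀ s ∈ Set.Icc 0 (l i), HasDerivWithinAt (Φ i) (t i s) (Set.Icc 0 (l i)) s)
    (htc : ∀ i, ContinuousOn (t i) (Set.Icc 0 (l i)))
    (htu : ∀ i, ∀ s ∈ Set.Icc 0 (l i), ‖t i s‖ = 1) :
    ∃ kc > (0:ℝ), ∀ (v dv w dw : Fin nE → ℝ → E3) (V W : Fin nV → E3),
      (∀ i, H1On (l i) (v i) (dv i)) → (∀ i, H1On (l i) (w i) (dw i)) →
      ∃ (q p : Fin nE → ℝ → E3) (Pp Pm Qp Qm : Fin nE → E3) (al be : E3),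
        (∀ i, SqIntOn (q i) (l i)) ∧ (∀ i, SqIntOn (p i) (l i)) ∧
        Real.sqrt (normVsq l q p Pp Pm Qp Qm al be) ≤ 1 ∧
        kc * Real.sqrt (normMsq l v dv w dw V W) ≤
          bform tail head l t q p Pp Pm Qp Qm al be v dv w dw V W :=
  stent_continuous_inf_sup_general tail head l hl hNE hconn t htc htu
end
end

section
/- Triviality of the discrete kernel of B_h^T: assume all struts are straight, the underlying graph is connected, and k ≥ n − 1. Suppose (v^i), (w^i) are families of ℝ³-valued polynomial functions of degree ≤ n on the edges and V, W ∈ (ℝ³)^{n_V} satisfy: (1) Σ_i ∫₀^{ℓⁱ}(−p^i·(∂ₛv^i + tⁱ × w^i) − q^i·∂ₛw^i) ds = 0 for all families (p^i), (q^i) of ℝ³-valued polynomial functions of degree ≤ k; (2) Σ_i ∫₀^{ℓⁱ} v^i ds = 0 and Σ_i ∫₀^{ℓⁱ} w^i ds = 0; (3) v^i(0) = V^{tail(i)}, v^i(ℓⁱ) = V^{head(i)}, w^i(0) = W^{tail(i)}, w^i(ℓⁱ) = W^{head(i)} for every edge i. Then v^i = 0 and w^i = 0 for every edge i, and V = 0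 and W = 0. -/
open MeasureTheory Matrix

noncomputable section

variable {nE nV : ℕ}

/-!
Testing the first equation with `q = ∂ₛw`, `p = 0` gives `∑ ∫ |∂ₛw|² = 0`; since `∂ₛw` is a
polynomial, it vanishes, so `w` is constant on each strut. The boundary conditions make these
constants agree at shared vertices, so by connectivity `w` is one global constant, which the mean
condition forces to be `0`. With `w = 0` the coupling term `t × w` drops out, and testing with
`p = ∂ₛv`, `q = 0` yields the same conclusion for `v`.
-/

lemma dot3_self (a : E3) : dot3 a a = ‖a‖ ^ 2 := by
  rw [EuclideanSpace.real_norm_sq_eq, dot3]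
  simp [sq]

lemma dot3_zero_left (b : E3) : dot3 0 b = 0 := by simp [dot3]

lemma cross3_zero_right (a : E3) : cross3 a 0 = 0 := by
  ext j; fin_cases j <;> simp [cross3]

lemma eqOn_zero_of_setIntegral_Ioc_eq_zero {f : ℝ → ℝ} {a b : ℝ} (hf : Continuous f)
    (hnn : ∀ s, 0 ≤ f s) (h : ∫ s in Set.Ioc a b, f s = 0) : Set.EqOn f 0 (Set.Ioo a b) := by
  have hae : f =ᵐ[volume.restrict (Set.Ioc a b)] 0 :=
    (integral_eq_zero_iff_of_nonneg hnn hf.integrableOn_Ioc).mp h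
  rw [← Measure.restrict_congr_set Ioo_ae_eq_Ioc] at hae
  exact Measure.eqOn_open_of_ae_eq hae isOpen_Ioo hf.continuousOn continuousOn_const

namespace PolyDeg

variable {m : ℕ} {g : ℝ → E3}

lemma zero (m : ℕ) : PolyDeg m fun _ => 0 :=
  fun _ => ⟨0, by simp, by simp⟩

lemma mono {m' : ℕ} (hg : PolyDeg m g) (h : m ≤ m') : PolyDeg m' g :=
  fun j => (hg j).imp fun _ hP => ⟨hP.1.trans h, hP.2⟩

lemma of_hasDerivAt {g' : ℝ → E3} (hg : PolyDeg m g) (hd : ∀ s, HasDerivAt g (g' s) s) :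
    PolyDeg (m - 1) g' := by
  intro j
  obtain ⟨P, hdeg, hP⟩ := hg j
  refine ⟨P.derivative, (P.natDegree_derivative_le).trans (Nat.sub_le_sub_right hdeg 1),
    fun s => ?_⟩
  have hcoord : HasDerivAt (fun s => g s j) (g' s j) s :=
    (EuclideanSpace.proj (𝕜 := ℝ) j).hasFDerivAt.comp_hasDerivAt s (hd s)
  rw [funext hP] at hcoord
  exact hcoord.unique (P.hasDerivAt s)

protected lemma continuous (hg : PolyDeg m g) : Continuous g := by
  refine (PiLp.continuous_toLp 2 _).comp (continuous_pi fun j => ?_)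
  obtain ⟨P, -, hP⟩ := hg j
  exact (funext hP).symm ▸ P.continuous

lemma eq_zero_of_infinite {S : Set ℝ} (hS : S.Infinite) (hg : PolyDeg m g)
    (h : ∀ s ∈ S, g s = 0) (s : ℝ) : g s = 0 := by
  ext j
  obtain ⟨P, -, hP⟩ := hg j
  have hP0 : P = 0 := P.eq_zero_of_infinite_isRoot <| hS.mono fun x hx => by
    simp [Polynomial.IsRoot, ← hP, h x hx]
  simp [hP, hP0]

lemma eq_zero_of_setIntegral_dot3_self_eq_zero {a b : ℝ} (hab : a < b) (hg : PolyDeg m g)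
    (h : ∫ s in Set.Ioc a b, dot3 (g s) (g s) = 0) (s : ℝ) : g s = 0 := by
  simp only [dot3_self] at h
  have hvan := eqOn_zero_of_setIntegral_Ioc_eq_zero (f := fun s => ‖g s‖ ^ 2)
    (hg.continuous.norm.pow 2) (fun _ => by positivity) h
  exact hg.eq_zero_of_infinite (Set.Ioo_infinite hab) (fun x hx => by simpa using hvan hx) s

end PolyDeg

lemma eq_zero_of_sum_setIntegral_dot3_self_eq_zero {ι : Type*} [Fintype ι] {m : ℕ}
    {l : ι → ℝ} (hl : ∀ i, 0 < l i) {g : ι → ℝ → E3} (hg : ∀ i, PolyDeg m (g i))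
    (h : ∑ i, ∫ s in Set.Ioc 0 (l i), dot3 (g i s) (g i s) = 0) (i : ι) (s : ℝ) : g i s = 0 := by
  have hnn : ∀ i ∈ Finset.univ, 0 ≤ ∫ s in Set.Ioc 0 (l i), dot3 (g i s) (g i s) :=
    fun i _ => setIntegral_nonneg measurableSet_Ioc fun s _ => by rw [dot3_self]; positivity
  exact (hg i).eq_zero_of_setIntegral_dot3_self_eq_zero (hl i)
    ((Finset.sum_eq_zero_iff_of_nonneg hnn).mp h i (Finset.mem_univ i)) s

lemma EdgeConn.eq_of_forall_tail_eq_head {tail head : Fin nE → Fin nV}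
    (hconn : EdgeConn tail head) {α : Type*} {f : Fin nV → α}
    (hf : ∀ i, f (tail i) = f (head i)) (a b : Fin nV) : f a = f b := by
  induction hconn a b with
  | refl => rfl
  | tail _ hstep ih =>
      obtain ⟨i, ⟨ht, hh⟩ | ⟨ht, hh⟩⟩ := hstep
      · rw [ih, ← ht, hf i, hh]
      · rw [ih, ← hh, ← hf i, ht]

lemma eq_zero_of_hasDerivAt_zero_of_sum_setIntegral_eq_zero {E : Type*}
    [NormedAddCommGroup E] [NormedSpace ℝ E] [CompleteSpace E]
    {tail head : Fin nE → Fin nV} {l : Fin nE → ℝ}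
    (hl : ∀ i, 0 < l i) (hNE : 0 < nE) (hconn : EdgeConn tail head)
    {u : Fin nE → ℝ → E} {U : Fin nV → E} (hd : ∀ i s, HasDerivAt (u i) 0 s)
    (htail : ∀ i, u i 0 = U (tail i)) (hhead : ∀ i, u i (l i) = U (head i))
    (hint : ∑ i, ∫ s in Set.Ioc 0 (l i), u i s = 0) :
    (∀ i s, u i s = 0) ∧ U = 0 := by
  have hconst : ∀ i s, u i s = U (tail i) := fun i s =>
    (is_const_of_deriv_eq_zero (fun x => (hd i x).differentiableAt)
      (fun x => (hd i x).deriv) s 0).trans (htail i)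
  set c := U (tail ⟨0, hNE⟩)
  have hU : ∀ a, U a = c := fun a =>
    hconn.eq_of_forall_tail_eq_head (fun i => (hconst i (l i)).symm.trans (hhead i)) a _
  have hu : ∀ i s, u i s = c := fun i s => (hconst i s).trans (hU _)
  have hsum : (∑ i, l i) • c = 0 := by
    rw [← hint, Finset.sum_smul]
    refine Finset.sum_congr rfl fun i _ => ?_
    rw [setIntegral_congr_fun measurableSet_Ioc fun s _ => hu i s, setIntegral_const,
      Real.volume_real_Ioc_of_le (hl i).le, sub_zero]
  have hpos : 0 < ∑ i, l i :=
    Finset.sum_pos (fun i _ => hl i) ⟨⟨0, hNE⟩, Finset.mem_univ _⟩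
  have hc : c = 0 := (smul_eq_zero.mp hsum).resolve_left hpos.ne'
  exact ⟨fun i s => (hu i s).trans hc, funext fun a => (hU a).trans hc⟩

theorem stent_discrete_ker_BT_trivial_general {k n : ℕ}
    (tail head : Fin nE → Fin nV) (l : Fin nE → ℝ)
    (hl : ∀ i, 0 < l i) (hNE : 0 < nE) (hconn : EdgeConn tail head)
    (t : Fin nE → E3)
    (hkn : n ≤ k + 1)
    (v dv w dw : Fin nE → ℝ → E3) (V W : Fin nV → E3)
    (hvn : ∀ i, PolyDeg n (v i)) (hdv : ∀ i, ∀ s, HasDerivAt (v i) (dv i s) s)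
    (hwn : ∀ i, PolyDeg n (w i)) (hdw : ∀ i, ∀ s, HasDerivAt (w i) (dw i s) s)
    (h1 : ∀ (p q : Fin nE → ℝ → E3),
      (∀ i, PolyDeg k (p i)) → (∀ i, PolyDeg k (q i)) →
      (∑ i, ∫ s in Set.Ioc 0 (l i),
        (-(dot3 (p i s) (dv i s + cross3 (t i) (w i s))) - dot3 (q i s) (dw i s))) = 0)
    (h2v : ∑ i, ∫ s in Set.Ioc 0 (l i), v i s = 0)
    (h2w : ∑ i, ∫ s in Set.Ioc 0 (l i), w i s = 0)
    (hb1 : ∀ i, v i 0 = V (tail i)) (hb2 : ∀ i, v i (l i) = V (head i))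
    (hb3 : ∀ i, w i 0 = W (tail i)) (hb4 : ∀ i, w i (l i) = W (head i)) :
    (∀ i, ∀ s ∈ Set.Icc 0 (l i), v i s = 0 ∧ w i s = 0) ∧ V = 0 ∧ W = 0 := by
  have hdvP : ∀ i, PolyDeg k (dv i) := fun i => ((hvn i).of_hasDerivAt (hdv i)).mono (by omega)
  have hdwP : ∀ i, PolyDeg k (dw i) := fun i => ((hwn i).of_hasDerivAt (hdw i)).mono (by omega)
  have hdw0 : ∀ i s, dw i s = 0 := by
    refine eq_zero_of_sum_setIntegral_dot3_self_eq_zero hl hdwP ?_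
    simpa [dot3_zero_left, integral_neg] using h1 (fun _ _ => 0) dw (fun _ => .zero k) hdwP
  obtain ⟨hw0, hW0⟩ := eq_zero_of_hasDerivAt_zero_of_sum_setIntegral_eq_zero hl hNE hconn
    (fun i s => hdw0 i s ▸ hdw i s) hb3 hb4 h2w
  have hdv0 : ∀ i s, dv i s = 0 := by
    refine eq_zero_of_sum_setIntegral_dot3_self_eq_zero hl hdvP ?_
    simpa [hw0, cross3_zero_right, dot3_zero_left, integral_neg] using
      h1 dv (fun _ _ => 0) hdvP (fun _ => .zero k)
  obtain ⟨hv0, hV0⟩ := eq_zero_of_hasDerivAt_zero_of_sum_setIntegral_eq_zero hl hNE hconn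
    (fun i s => hdv0 i s ▸ hdv i s) hb1 hb2 h2v
  exact ⟨fun i s _ => ⟨hv0 i s, hw0 i s⟩, hV0, hW0⟩

/-- Triviality of the discrete kernel of Bₕᵀ (straight struts,
connected graph, k ≥ n − 1). -/
theorem stent_discrete_ker_BT_trivial {k n : ℕ}
    (tail head : Fin nE → Fin nV) (l : Fin nE → ℝ)
    (hl : ∀ i, 0 < l i) (hNE : 0 < nE) (hconn : EdgeConn tail head)
    (t : Fin nE → E3) (Φ : Fin nE → ℝ → E3)
    (htu : ∀ i, ‖t i‖ = 1)
    (hΦ : ∀ i, ∀ s ∈ Set.Icc 0 (l i), Φ i s = Φ i 0 + s • t i)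
    (hkn : n ≤ k + 1)
    (v dv w dw : Fin nE → ℝ → E3) (V W : Fin nV → E3)
    (hvn : ∀ i, PolyDeg n (v i)) (hdv : ∀ i, ∀ s, HasDerivAt (v i) (dv i s) s)
    (hwn : ∀ i, PolyDeg n (w i)) (hdw : ∀ i, ∀ s, HasDerivAt (w i) (dw i s) s)
    (h1 : ∀ (p q : Fin nE → ℝ → E3),
      (∀ i, PolyDeg k (p i)) → (∀ i, PolyDeg k (q i)) →
      (∑ i, ∫ s in Set.Ioc 0 (l i),
        (-(dot3 (p i s) (dv i s + cross3 (t i) (w i s))) - dot3 (q i s) (dw i s))) = 0)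
    (h2v : ∑ i, ∫ s in Set.Ioc 0 (l i), v i s = 0)
    (h2w : ∑ i, ∫ s in Set.Ioc 0 (l i), w i s = 0)
    (hb1 : ∀ i, v i 0 = V (tail i)) (hb2 : ∀ i, v i (l i) = V (head i))
    (hb3 : ∀ i, w i 0 = W (tail i)) (hb4 : ∀ i, w i (l i) = W (head i)) :
    (∀ i, ∀ s ∈ Set.Icc 0 (l i), v i s = 0 ∧ w i s = 0) ∧ V = 0 ∧ W = 0 :=
  stent_discrete_ker_BT_trivial_general tail head l hl hNE hconn t hkn v dv w dw V W hvn hdv hwn hdw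
    h1 h2v h2w hb1 hb2 hb3 hb4
end
end
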